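/- Let n ≥ 1, d = 2^n, and let U and V be d × d unitary matrices over ℂ. Define C_HST(U,V) := 1 − |Tr(V†U)|²/d². Then C_HST(U,V) = 0 if and only if there exists φ ∈ ℝ such that V = e^{iφ} U; equivalently, |Tr(V†U)| = d if and only if U and V differ by a global phase factor. -/

import Mathlib

open Matrix Complex

noncomputable section

/-- The Hilbert-Schmidt test cost for unitaries on `n` qubits (`d = 2^n`):
`C_HST(U,V) = 1 - |Tr(V†U)|²/d²`. -/
def CHST (n : ℕ) (U V : Matrix (Fin n → Fin 2) (Fin n → Fin 2) ℂ) : ℝ :=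
  1 - ‖(Vᴴ * U).trace‖ ^ 2 / ((2 : ℝ) ^ n) ^ 2

/-! The matrix `W = V†U` is unitary. If `|Tr W| = d`, then `c = Tr W / d` has `|c| = 1` and
`c̄ Tr W = d`, so `Tr ((W - c)† (W - c)) = 2d - 2 Re (c̄ Tr W) = 0`. Hence `W = c • 1`, that is
`U = c • V`. -/

theorem Complex.exists_eq_exp_I_mul_of_norm_eq_one {z : ℂ} (hz : ‖z‖ = 1) :
    ∃ φ : ℝ, z = exp (I * φ) :=
  ⟨arg z, by simpa [hz, mul_comm I] using (norm_mul_exp_arg_mul_I z).symm⟩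

namespace Matrix

open scoped ComplexOrder

variable {ι : Type*} [Fintype ι] [DecidableEq ι]

theorem conjTranspose_mul_self_of_mem_unitaryGroup {α : Type*} [CommRing α] [StarRing α]
    {W : Matrix ι ι α} (hW : W ∈ unitaryGroup ι α) : Wᴴ * W = 1 :=
  mem_unitaryGroup_iff'.mp hW

theorem mul_conjTranspose_self_of_mem_unitaryGroup {α : Type*} [CommRing α] [StarRing α]
    {W : Matrix ι ι α} (hW : W ∈ unitaryGroup ι α) : W * Wᴴ = 1 :=
  mem_unitaryGroup_iff.mp hW

theorem exists_eq_smul_one_of_norm_trace_eq_card {W : Matrix ι ι ℂ}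
    (hW : W ∈ unitaryGroup ι ℂ) (h : ‖W.trace‖ = Fintype.card ι) :
    ∃ c : ℂ, ‖c‖ = 1 ∧ W = c • 1 := by
  rcases isEmpty_or_nonempty ι with hι | hι
  · exact ⟨1, norm_one, Subsingleton.elim _ _⟩
  set c := W.trace / Fintype.card ι
  have hnorm : star W.trace * W.trace = Fintype.card ι * Fintype.card ι := by
    rw [← starRingEnd_apply, conj_mul', h]; push_cast; ring
  have hc : star c * W.trace = Fintype.card ι := by
    rw [star_div₀, div_mul_eq_mul_div, hnorm, ← starRingEnd_apply, conj_natCast, mul_self_div_self]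
  have hc_norm : ‖c‖ = 1 := by rw [norm_div, h, norm_natCast, div_self (by simp)]
  have hc_unit : c * star c = 1 := by
    rw [← starRingEnd_apply, mul_conj', hc_norm]; norm_num
  have hc' : c * star W.trace = Fintype.card ι := by simpa using congr_arg star hc
  refine ⟨c, hc_norm, ?_⟩
  rw [← sub_eq_zero, ← trace_conjTranspose_mul_self_eq_zero_iff]
  simp only [conjTranspose_sub, conjTranspose_smul, conjTranspose_one, sub_mul, mul_sub,
    Matrix.smul_mul, Matrix.mul_smul, conjTranspose_mul_self_of_mem_unitaryGroup hW, mul_one,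
    one_mul, smul_smul, trace_sub, trace_smul, trace_one, trace_conjTranspose, smul_eq_mul]
  linear_combination -hc - hc' + (Fintype.card ι : ℂ) * hc_unit

theorem norm_trace_conjTranspose_mul_eq_card_iff {U V : Matrix ι ι ℂ}
    (hU : U ∈ unitaryGroup ι ℂ) (hV : V ∈ unitaryGroup ι ℂ) :
    ‖(Vᴴ * U).trace‖ = Fintype.card ι ↔ ∃ φ : ℝ, V = exp (I * φ) • U := by
  constructor
  · intro h
    have hVU : Vᴴ * U ∈ unitaryGroup ι ℂ := mul_mem (Unitary.star_mem hV) hU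
    obtain ⟨c, hc_norm, hc⟩ := exists_eq_smul_one_of_norm_trace_eq_card hVU h
    have hU_eq : U = c • V :=
      calc U = V * (Vᴴ * U) := by
            rw [← Matrix.mul_assoc, mul_conjTranspose_self_of_mem_unitaryGroup hV, Matrix.one_mul]
        _ = c • V := by rw [hc, Matrix.mul_smul, Matrix.mul_one]
    obtain ⟨φ, hφ⟩ := Complex.exists_eq_exp_I_mul_of_norm_eq_one (norm_star c ▸ hc_norm)
    refine ⟨φ, ?_⟩
    rw [← hφ, hU_eq, smul_smul, ← starRingEnd_apply, conj_mul', hc_norm]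
    simp
  · rintro ⟨φ, rfl⟩
    rw [conjTranspose_smul, Matrix.smul_mul, conjTranspose_mul_self_of_mem_unitaryGroup hU,
      trace_smul, trace_one, smul_eq_mul, norm_mul, norm_star, mul_comm I, norm_exp_ofReal_mul_I,
      Complex.norm_natCast, one_mul]

end Matrix

theorem CHST_eq_zero_iff (n : ℕ) (U V : Matrix (Fin n → Fin 2) (Fin n → Fin 2) ℂ) :
    CHST n U V = 0 ↔ ‖(Vᴴ * U).trace‖ = (2 : ℝ) ^ n := by
  have hd : (0 : ℝ) < 2 ^ n := by positivity
  rw [CHST, sub_eq_zero, eq_comm, div_eq_one_iff_eq (by positivity),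
    pow_left_inj₀ (norm_nonneg _) hd.le two_ne_zero]

theorem stmt0 (n : ℕ)
    (U V : Matrix (Fin n → Fin 2) (Fin n → Fin 2) ℂ)
    (hU : U ∈ Matrix.unitaryGroup (Fin n → Fin 2) ℂ)
    (hV : V ∈ Matrix.unitaryGroup (Fin n → Fin 2) ℂ) :
    (CHST n U V = 0 ↔ ∃ φ : ℝ, V = Complex.exp (Complex.I * φ) • U) ∧
    (‖(Vᴴ * U).trace‖ = (2 : ℝ) ^ n ↔ ∃ φ : ℝ, V = Complex.exp (Complex.I * φ) • U) := by
  have hphase := Matrix.norm_trace_conjTranspose_mul_eq_card_iff hU hV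
  simp only [Fintype.card_fun, Fintype.card_fin, Nat.cast_pow, Nat.cast_ofNat] at hphase
  exact ⟨(CHST_eq_zero_iff n U V).trans hphase, hphase⟩

end
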